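/- arXiv:2109.07937 — 5 statements merged into one kernel-verified Lean document; each statement's English description precedes it below -/
import Mathlib

section
/- Let (n, g₀; (c₁,n₁), …, (c_k,n_k)) be a cyclic data set of genus g ≥ 2 such that n is odd and nⱼ = n for some index j (i.e. the data set has a fixed point). Then n ≤ 3g + 3. -/
/-- A *cyclic data set* of degree `n` and genus `g` (Definition 2.1 of the paper), with
orbifold genus `g₀` and cone-point data `C = [(c₁,n₁), …, (c_k,n_k)]`: `n ≥ 2`, `k ≥ 1`,
each `nᵢ ≥ 2` divides `n` with `gcd(cᵢ, nᵢ) = 1`; omitting any `nᵢ` does not change the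
lcm of the `nⱼ`'s; if `g₀ = 0` then that lcm equals `n`; `Σᵢ (n/nᵢ)·cᵢ ≡ 0 (mod n)`;
and the Riemann–Hurwitz formula `2g − 2 = n(2g₀ − 2) + Σᵢ (n − n/nᵢ)` holds. -/
def IsCyclicDataSet (n g₀ g : ℕ) (C : List (ℤ × ℕ)) : Prop :=
  2 ≤ n ∧ C ≠ [] ∧
  (∀ p ∈ C, 2 ≤ p.2 ∧ p.2 ∣ n ∧ Int.gcd p.1 (p.2 : ℤ) = 1) ∧
  (∀ i < C.length,
    ((C.map Prod.snd).eraseIdx i).foldr Nat.lcm 1 = (C.map Prod.snd).foldr Nat.lcm 1) ∧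
  (g₀ = 0 → (C.map Prod.snd).foldr Nat.lcm 1 = n) ∧
  ((n : ℤ) ∣ (C.map (fun p => ((n : ℤ) / (p.2 : ℤ)) * p.1)).sum) ∧
  (2 * (g : ℤ) - 2 =
    (n : ℤ) * (2 * (g₀ : ℤ) - 2) + (C.map (fun p => (n : ℤ) - (n : ℤ) / (p.2 : ℤ))).sum)


lemma odd_of_dvd_odd {m n : ℕ} (hodd : Odd n) (h : m ∣ n) : Odd m := by
  rcases h with ⟨c, rfl⟩
  exact (Nat.odd_mul.mp hodd).1

lemma eraseIdx_middle {α : Type*} (l1 l2 : List α) (a : α) :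
    (l1 ++ a :: l2).eraseIdx l1.length = l1 ++ l2 := by
  induction l1 with
  | nil => simp
  | cons x xs ih => simp [List.eraseIdx, ih]

lemma term_aux {n m : ℕ} (hn : 2 ≤ n) (hodd : Odd n) (hm2 : 2 ≤ m) (hdvd : m ∣ n) :
    0 ≤ (n:ℤ) - (n:ℤ)/(m:ℤ) ∧ 2*(n:ℤ) ≤ 3*((n:ℤ) - (n:ℤ)/(m:ℤ)) := by
  obtain ⟨c, hc⟩ := hdvd
  have hm3 : 3 ≤ m := by
    have := odd_of_dvd_odd hodd ⟨c, hc⟩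
    rw [Nat.odd_iff] at this; omega
  have h3c : 3 * c ≤ n := by
    calc 3 * c ≤ m * c := Nat.mul_le_mul_right c (by omega)
    _ = n := hc.symm
  have hdiv : (n:ℤ)/(m:ℤ) = (c:ℤ) := by
    rw [hc]; push_cast
    exact Int.mul_ediv_cancel_left _ (by exact_mod_cast (by omega : m ≠ 0))
  rw [hdiv]
  have : (3:ℤ) * c ≤ n := by exact_mod_cast h3c
  constructor <;> linarith

lemma aux_g0 (n g : ℕ) (R : List (ℤ × ℕ)) (hn : 2 ≤ n) (hodd : Odd n) (hg : 2 ≤ g)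
    (hmem : ∀ q ∈ R, 2 ≤ q.2 ∧ q.2 ∣ n)
    (hL : (R.map Prod.snd).foldr Nat.lcm 1 = n)
    (hsum : 2*(g:ℤ) - 2 =
      -2*(n:ℤ) + ((n:ℤ)-1) + (R.map (fun q => (n:ℤ) - (n:ℤ)/(q.2:ℤ))).sum) :
    n ≤ 3*g + 3 := by
  match R with
  | [] => simp at hL; omega
  | [a] =>
    have ha := hmem a (by simp)
    have han : a.2 = n := by simpa [Nat.lcm_one_right] using hL
    have hdiv : (n:ℤ)/(a.2:ℤ) = 1 := by
      rw [han]; exact Int.ediv_self (by exact_mod_cast (by omega : n ≠ 0))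
    simp [hdiv] at hsum
    omega
  | [a, b] =>
    have ha := hmem a (by simp)
    have hb := hmem b (by simp)
    have hL' : Nat.lcm a.2 b.2 = n := by simpa [Nat.lcm_one_right] using hL
    set x := n / a.2 with hxdef
    set y := n / b.2 with hydef
    have hx : a.2 * x = n := Nat.mul_div_cancel' ha.2
    have hy : b.2 * y = n := Nat.mul_div_cancel' hb.2
    have ha3 : 3 ≤ a.2 := by
      have := odd_of_dvd_odd hodd ha.2; rw [Nat.odd_iff] at this; omega
    have hb3 : 3 ≤ b.2 := by
      have := odd_of_dvd_odd hodd hb.2; rw [Nat.odd_iff] at this; omega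
    set d := Nat.gcd a.2 b.2 with hddef
    have hdn : d * n = a.2 * b.2 := by rw [← hL']; exact Nat.gcd_mul_lcm _ _
    have hxyd : x * y * d = n := by
      have h1 : (x * y * d) * n = n * n := by
        calc (x * y * d) * n = (x * y) * (d * n) := by ring
        _ = (x * y) * (a.2 * b.2) := by rw [hdn]
        _ = (a.2 * x) * (b.2 * y) := by ring
        _ = n * n := by rw [hx, hy]
      exact Nat.eq_of_mul_eq_mul_right (by omega) h1
    have hx1 : 1 ≤ x := by by_contra h; push_neg at h; interval_cases x <;> omega
    have hy1 : 1 ≤ y := by by_contra h; push_neg at h; interval_cases y <;> omega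
    have hxodd : Odd x := odd_of_dvd_odd hodd ⟨a.2, by rw [← hx]; ring⟩
    have hyodd : Odd y := odd_of_dvd_odd hodd ⟨b.2, by rw [← hy]; ring⟩
    have h3x : 3 * x ≤ n := by calc 3 * x ≤ a.2 * x := Nat.mul_le_mul_right x ha3
                                _ = n := hx
    have h3y : 3 * y ≤ n := by calc 3 * y ≤ b.2 * y := Nat.mul_le_mul_right y hb3
                                _ = n := hy
    have hkey : 3 * x + 3 * y ≤ n + 9 := by
      rcases eq_or_lt_of_le hx1 with h1 | h1
      · omega
      rcases eq_or_lt_of_le hy1 with h2 | h2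
      · omega
      have hx3 : 3 ≤ x := by rw [Nat.odd_iff] at hxodd; omega
      have hy3 : 3 ≤ y := by rw [Nat.odd_iff] at hyodd; omega
      have hd1 : 1 ≤ d := by
        rcases Nat.eq_zero_or_pos d with h | h
        · rw [hddef] at h; have := Nat.eq_zero_of_gcd_eq_zero_left h; omega
        · omega
      have hxyn : x * y ≤ n := by
        calc x * y ≤ x * y * d := Nat.le_mul_of_pos_right _ (by omega)
        _ = n := hxyd
      zify at hx3 hy3 hxyn ⊢
      nlinarith [mul_nonneg (by linarith : (0:ℤ) ≤ (x:ℤ) - 3) (by linarith : (0:ℤ) ≤ (y:ℤ) - 3)]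
    have hdx : (n:ℤ)/(a.2:ℤ) = (x:ℤ) := by
      rw [hxdef]; exact (Int.natCast_div n a.2).symm
    have hdy : (n:ℤ)/(b.2:ℤ) = (y:ℤ) := by
      rw [hydef]; exact (Int.natCast_div n b.2).symm
    simp [hdx, hdy] at hsum
    have : (3:ℤ) * x + 3 * y ≤ (n:ℤ) + 9 := by exact_mod_cast hkey
    have hfin : (n:ℤ) ≤ 3*(g:ℤ) + 3 := by linarith
    exact_mod_cast hfin
  | a :: b :: c :: rest =>
    have ha := term_aux hn hodd (hmem a (by simp)).1 (hmem a (by simp)).2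
    have hb := term_aux hn hodd (hmem b (by simp)).1 (hmem b (by simp)).2
    have hc := term_aux hn hodd (hmem c (by simp)).1 (hmem c (by simp)).2
    have hrest : 0 ≤ (rest.map (fun q => (n:ℤ) - (n:ℤ)/(q.2:ℤ))).sum := by
      apply List.sum_nonneg
      intro t ht
      simp only [List.mem_map] at ht
      obtain ⟨q, hq, rfl⟩ := ht
      have hq' := hmem q (by simp [hq])
      exact (term_aux hn hodd hq'.1 hq'.2).1
    simp only [List.map_cons, List.sum_cons] at hsum
    have hfin : (n:ℤ) ≤ 3*(g:ℤ) + 3 := by linarith [ha.2, hb.2, hc.2]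
    exact_mod_cast hfin

/-- Let `(n, g₀; (c₁,n₁), …, (c_k,n_k))` be a cyclic data set of genus
`g ≥ 2` such that `n` is odd and `nⱼ = n` for some index `j` (i.e. the data set has a
fixed point). Then `n ≤ 3g + 3`. -/
theorem stmt_7 (n g₀ g : ℕ) (C : List (ℤ × ℕ)) (h : IsCyclicDataSet n g₀ g C)
    (hg : 2 ≤ g) (hodd : Odd n) (hfix : ∃ p ∈ C, p.2 = n) :
    n ≤ 3*g + 3 := by
  obtain ⟨hn2, hne, hmem, hlcm, hg0, hdvd, hRH⟩ := h
  obtain ⟨p, hpC, hpn⟩ := hfix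
  obtain ⟨l1, l2, rfl⟩ := List.append_of_mem hpC
  have hn0 : (n:ℤ) ≠ 0 := by exact_mod_cast (by omega : n ≠ 0)
  have hfp : (n:ℤ) - (n:ℤ)/(p.2:ℤ) = (n:ℤ) - 1 := by
    rw [hpn, Int.ediv_self hn0]
  have hmem' : ∀ q ∈ l1 ++ l2, 2 ≤ q.2 ∧ q.2 ∣ n := by
    intro q hq
    have hq' : q ∈ l1 ++ p :: l2 := by
      simp only [List.mem_append, List.mem_cons] at hq ⊢; tauto
    exact ⟨(hmem q hq').1, (hmem q hq').2.1⟩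
  have hsum' : 2*(g:ℤ) - 2 = (n:ℤ)*(2*(g₀:ℤ)-2) + ((n:ℤ)-1)
      + ((l1 ++ l2).map (fun q => (n:ℤ) - (n:ℤ)/(q.2:ℤ))).sum := by
    rw [hRH]
    simp only [List.map_append, List.sum_append, List.map_cons, List.sum_cons, hfp]
    ring
  rcases Nat.eq_zero_or_pos g₀ with h0 | h0
  · subst h0
    have hLfull := hg0 rfl
    have hlen : l1.length < (l1 ++ p :: l2).length := by
      simp
    have herase := hlcm l1.length hlen
    have he2 : (((l1 ++ p :: l2).map Prod.snd).eraseIdx l1.length)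
        = (l1 ++ l2).map Prod.snd := by
      rw [List.map_append, List.map_cons, List.map_append]
      have := eraseIdx_middle (l1.map Prod.snd) (l2.map Prod.snd) p.2
      rwa [List.length_map] at this
    rw [he2, hLfull] at herase
    apply aux_g0 n g (l1 ++ l2) hn2 hodd hg hmem' herase
    rw [hsum']
    push_cast
    ring
  · have hsnn : 0 ≤ ((l1 ++ l2).map (fun q => (n:ℤ) - (n:ℤ)/(q.2:ℤ))).sum := by
      apply List.sum_nonneg
      intro t ht
      simp only [List.mem_map] at ht
      obtain ⟨q, hq, rfl⟩ := ht
      exact (term_aux hn2 hodd (hmem' q hq).1 (hmem' q hq).2).1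
    have hgz : (1:ℤ) ≤ (g₀:ℤ) := by exact_mod_cast h0
    have hnn : (0:ℤ) ≤ (n:ℤ)*(2*(g₀:ℤ)-2) := mul_nonneg (by positivity) (by linarith)
    have hfin : (n:ℤ) ≤ 3*(g:ℤ) + 3 := by linarith
    exact_mod_cast hfin
end

section
/- Let (n, g₀; (c₁,n₁), …, (c_k,n_k)) be a cyclic data set of genus g ≥ 1 having at least two distinct indices j with nⱼ = n (i.e. the data set has at least two fixed points). Then n ≤ 4g; moreover, if n is odd then n ≤ 3g. -/
/-- Let `(n, g₀; (c₁,n₁), …, (c_k,n_k))` be a cyclic data set of genus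
`g ≥ 1` having at least two distinct indices `j` with `nⱼ = n` (i.e. at least two fixed
points). Then `n ≤ 4g`; moreover, if `n` is odd then `n ≤ 3g`. -/
theorem stmt_8 (n g₀ g : ℕ) (C : List (ℤ × ℕ)) (h : IsCyclicDataSet n g₀ g C)
    (hg : 1 ≤ g) (i j : Fin C.length) (hij : i ≠ j)
    (hi : (C.get i).2 = n) (hj : (C.get j).2 = n) :
    n ≤ 4*g ∧ (Odd n → n ≤ 3*g) := by
  obtain ⟨hn2, hCne, hmem, -, -, -, hRH⟩ := h
  set f : ℤ × ℕ → ℤ := fun p => (n : ℤ) - (n : ℤ) / (p.2 : ℤ) with hf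
  have hsum : (C.map f).sum = ∑ m : Fin C.length, f C[m.1] := (Fin.sum_univ_fun_getElem C f).symm
  -- per-element facts
  have key : ∀ p ∈ C, 0 ≤ f p ∧ f p ≤ (n : ℤ) - 1 ∧ (n : ℤ) ≤ 2 * f p ∧
      (Odd n → 2 * (n : ℤ) ≤ 3 * f p) := by
    intro p hp
    obtain ⟨h2, hdvd, -⟩ := hmem p hp
    obtain ⟨q, hq⟩ := hdvd
    have hq1 : 1 ≤ q := by
      rcases Nat.eq_zero_or_pos q with h0 | h
      · subst h0; simp at hq; omega
      · exact h
    have hdiv : (n : ℤ) / (p.2 : ℤ) = (q : ℤ) := by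
      rw [hq]; push_cast; rw [mul_comm]
      exact Int.mul_ediv_cancel _ (Int.natCast_ne_zero.mpr (by omega))
    have hfp : f p = (n : ℤ) - (q : ℤ) := by rw [hf]; simp only [hdiv]
    have h2q : 2 * q ≤ n := by
      calc 2 * q ≤ p.2 * q := Nat.mul_le_mul_right q h2
        _ = n := hq.symm
    refine ⟨by rw [hfp]; push_cast; omega, by rw [hfp]; push_cast; omega,
      by rw [hfp]; push_cast; omega, ?_⟩
    intro hodd
    have hp3 : 3 ≤ p.2 := by
      rcases Nat.lt_or_ge p.2 3 with hlt | hge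
      · interval_cases h' : p.2
        · exfalso; rw [Nat.odd_iff] at hodd; omega
      · exact hge
    have h3q : 3 * q ≤ n := by
      calc 3 * q ≤ p.2 * q := Nat.mul_le_mul_right q hp3
        _ = n := hq.symm
    rw [hfp]; push_cast; omega
  have hfi : f (C.get i) = (n : ℤ) - 1 := by
    rw [hf]; simp only [hi]
    rw [Int.ediv_self (Int.natCast_ne_zero.mpr (by omega))]
  have hfj : f (C.get j) = (n : ℤ) - 1 := by
    rw [hf]; simp only [hj]
    rw [Int.ediv_self (Int.natCast_ne_zero.mpr (by omega))]
  set S := ∑ m : Fin C.length, f C[m.1] with hS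
  have hget : ∀ m : Fin C.length, f C[m.1] = f (C.get m) := fun m => rfl
  have hmemget : ∀ m : Fin C.length, C.get m ∈ C := fun m => List.get_mem C m
  rw [hsum] at hRH
  have hpair : ∑ m ∈ ({i, j} : Finset (Fin C.length)), f C[m.1] = 2*(n:ℤ) - 2 := by
    rw [Finset.sum_pair hij, hget, hget, hfi, hfj]; ring
  have hSlb : 2*(n:ℤ) - 2 ≤ S := by
    rw [← hpair, hS]
    exact Finset.sum_le_sum_of_subset_of_nonneg (Finset.subset_univ _)
      (fun m _ _ => (key _ (hmemget m)).1)
  rcases Nat.eq_zero_or_pos g₀ with h0 | h1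
  · -- g₀ = 0
    subst h0
    have hlen2 : 2 ≤ C.length := by
      have h1 := i.2; have h2 := j.2
      have h3 : i.1 ≠ j.1 := Fin.val_ne_of_ne hij
      omega
    rcases eq_or_lt_of_le hlen2 with hlen | hlen
    · -- exactly two cone points: contradiction with g ≥ 1
      exfalso
      have huniv : ({i, j} : Finset (Fin C.length)) = Finset.univ := by
        apply Finset.eq_univ_of_card
        rw [Finset.card_pair hij, Fintype.card_fin]
        omega
      have hSeq : S = 2*(n:ℤ) - 2 := by rw [hS, ← huniv, hpair]
      rw [hSeq] at hRH
      simp at hRH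
      omega
    · -- at least three cone points
      have hm : (({i, j} : Finset (Fin C.length))ᶜ).Nonempty := by
        rw [← Finset.card_pos, Finset.card_compl, Finset.card_pair hij,
          Fintype.card_fin]
        omega
      obtain ⟨m, hm⟩ := hm
      rw [Finset.mem_compl] at hm
      have htriple : ∑ x ∈ insert m ({i, j} : Finset (Fin C.length)), f C[x.1]
          = f C[m.1] + (2*(n:ℤ) - 2) := by
        rw [Finset.sum_insert hm, hpair]
      have hSlb3 : f C[m.1] + (2*(n:ℤ) - 2) ≤ S := by
        rw [← htriple, hS]
        exact Finset.sum_le_sum_of_subset_of_nonneg (Finset.subset_univ _)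
          (fun x _ _ => (key _ (hmemget x)).1)
      obtain ⟨-, -, hk2, hk3⟩ := key _ (hmemget m)
      rw [← hget m] at hk2 hk3
      simp only [Nat.cast_zero] at hRH
      constructor
      · have : (n : ℤ) ≤ 4 * g := by omega
        exact_mod_cast this
      · intro hodd
        have := hk3 hodd
        have : (n : ℤ) ≤ 3 * g := by omega
        exact_mod_cast this
  · -- g₀ ≥ 1
    have hA : 0 ≤ (n:ℤ) * (2 * (g₀:ℤ) - 2) := by
      apply mul_nonneg (by positivity)
      have : (1:ℤ) ≤ (g₀:ℤ) := by exact_mod_cast h1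
      omega
    have hng : (n : ℤ) ≤ (g : ℤ) := by omega
    constructor
    · have : (n : ℤ) ≤ 4 * g := by omega
      exact_mod_cast this
    · intro _
      have : (n : ℤ) ≤ 3 * g := by omega
      exact_mod_cast this
end

section
/- For every positive integer h and every integer a with gcd(a, 4h+2) = 1, the tuple (4h+2, 0; (a, 2), (ah, 2h+1), (a, 4h+2)) — with each rotation constant reduced modulo the corresponding order — is a cyclic data set of degree 4h+2 and genus h having a fixed point with rotation constant a. -/
lemma gcd_emod_one {c m : ℤ} (hc : Int.gcd c m = 1) : Int.gcd (c % m) m = 1 := by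
  rw [← Int.isCoprime_iff_gcd_eq_one] at hc ⊢
  have := hc.add_mul_left_left (-(c / m))
  rwa [show c + m * -(c / m) = c % m by rw [Int.emod_def]; ring] at this

lemma lcm_of_dvd {m n : ℕ} (h : m ∣ n) : Nat.lcm m n = n :=
  Nat.dvd_antisymm (Nat.lcm_dvd h dvd_rfl) (Nat.dvd_lcm_right _ _)


/-- For every positive integer `h` and every integer `a` with
`gcd(a, 4h+2) = 1`, the tuple `(4h+2, 0; (a, 2), (ah, 2h+1), (a, 4h+2))` — with each
rotation constant reduced modulo the corresponding order — is a cyclic data set of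
degree `4h+2` and genus `h` having a fixed point with rotation constant `a`. -/
theorem stmt_10 (h : ℕ) (hh : 0 < h) (a : ℤ) (ha : Int.gcd a (4*(h:ℤ) + 2) = 1) :
    IsCyclicDataSet (4*h + 2) 0 h
      [(a % 2, 2), ((a * (h:ℤ)) % (2*(h:ℤ) + 1), 2*h + 1),
        (a % (4*(h:ℤ) + 2), 4*h + 2)] ∧
    (∃ p ∈ ([(a % 2, 2), ((a * (h:ℤ)) % (2*(h:ℤ) + 1), 2*h + 1),
        (a % (4*(h:ℤ) + 2), 4*h + 2)] : List (ℤ × ℕ)),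
      p.2 = 4*h + 2 ∧ p.1 = a % (4*(h:ℤ) + 2)) := by
  have hcop : IsCoprime a (4*(h:ℤ) + 2) := Int.isCoprime_iff_gcd_eq_one.mpr ha
  have hc2 : IsCoprime a 2 := hcop.of_isCoprime_of_dvd_right ⟨2*(h:ℤ)+1, by ring⟩
  have hcodd : IsCoprime a (2*(h:ℤ)+1) := hcop.of_isCoprime_of_dvd_right ⟨2, by ring⟩
  have hch : IsCoprime (h:ℤ) (2*(h:ℤ)+1) := ⟨-2, 1, by ring⟩
  have hcah : IsCoprime (a * (h:ℤ)) (2*(h:ℤ)+1) := hcodd.mul_left hch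
  have hcast : ((4*h+2 : ℕ) : ℤ) = 4*(h:ℤ)+2 := by push_cast; ring
  have hcast2 : ((2*h+1 : ℕ) : ℤ) = 2*(h:ℤ)+1 := by push_cast; ring
  have hd2 : ((4*h+2 : ℕ) : ℤ) / ((2:ℕ):ℤ) = 2*(h:ℤ)+1 := by
    rw [hcast, show (4*(h:ℤ)+2) = 2 * (2*(h:ℤ)+1) by ring]
    norm_num [Int.mul_ediv_cancel_left]
  have hdodd : ((4*h+2 : ℕ) : ℤ) / ((2*h+1:ℕ):ℤ) = 2 := by
    rw [hcast, hcast2, show (4*(h:ℤ)+2) = (2*(h:ℤ)+1) * 2 by ring]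
    exact Int.mul_ediv_cancel_left _ (by positivity)
  have hdn : ((4*h+2 : ℕ) : ℤ) / ((4*h+2:ℕ):ℤ) = 1 :=
    Int.ediv_self (by positivity)
  refine ⟨⟨by omega, by simp, ?_, ?_, ?_, ?_, ?_⟩, ?_⟩
  · intro p hp
    simp only [List.mem_cons, List.not_mem_nil, or_false] at hp
    rcases hp with rfl | rfl | rfl
    · exact ⟨le_refl 2, ⟨2*h+1, by ring⟩,
        gcd_emod_one (by rw [← Int.isCoprime_iff_gcd_eq_one]; exact_mod_cast hc2)⟩
    · exact ⟨by omega, ⟨2, by ring⟩,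
        gcd_emod_one (by rw [← Int.isCoprime_iff_gcd_eq_one]; exact hcah)⟩
    · exact ⟨by omega, dvd_rfl,
        gcd_emod_one (by rw [← Int.isCoprime_iff_gcd_eq_one]; exact hcop)⟩
  · have l1 : Nat.lcm (2*h+1) (Nat.lcm (4*h+2) 1) = 4*h+2 := by
      rw [Nat.lcm_one_right]; exact lcm_of_dvd ⟨2, by ring⟩
    have l2 : Nat.lcm 2 (Nat.lcm (4*h+2) 1) = 4*h+2 := by
      rw [Nat.lcm_one_right]; exact lcm_of_dvd ⟨2*h+1, by ring⟩
    have l3 : Nat.lcm 2 (Nat.lcm (2*h+1) 1) = 4*h+2 := by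
      rw [Nat.lcm_one_right]
      rw [Nat.Coprime.lcm_eq_mul (by
        have h2 : (2*h+1) % 2 = 1 := by omega
        rw [Nat.Coprime, Nat.gcd_rec, h2, Nat.gcd_one_left])]
      ring
    have lfull : Nat.lcm 2 (Nat.lcm (2*h+1) (Nat.lcm (4*h+2) 1)) = 4*h+2 := by
      rw [l1]; exact lcm_of_dvd ⟨2*h+1, by ring⟩
    intro i hi
    simp only [List.length_cons, List.length_nil] at hi
    interval_cases i <;>
      simp only [List.map_cons, List.map_nil, List.eraseIdx, List.foldr] <;>
      rw [lfull] <;> [exact l1; exact l2; exact l3]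
  · intro _
    simp only [List.map_cons, List.map_nil, List.foldr, Nat.lcm_one_right]
    have : Nat.lcm (2*h+1) (4*h+2) = 4*h+2 := lcm_of_dvd ⟨2, by ring⟩
    rw [this]; exact lcm_of_dvd ⟨2*h+1, by ring⟩
  · simp only [List.map_cons, List.map_nil, List.sum_cons, List.sum_nil, add_zero]
    rw [hd2, hdodd, hdn, hcast]
    refine ⟨a - a/2 - (a*(h:ℤ))/(2*(h:ℤ)+1) - a/(4*(h:ℤ)+2), ?_⟩
    have e1 : a % 2 = a - 2*(a/2) := by rw [Int.emod_def]
    have e2 : (a*(h:ℤ)) % (2*(h:ℤ)+1) = a*(h:ℤ) - (2*(h:ℤ)+1)*((a*(h:ℤ))/(2*(h:ℤ)+1)) := by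
      rw [Int.emod_def]
    have e3 : a % (4*(h:ℤ)+2) = a - (4*(h:ℤ)+2)*(a/(4*(h:ℤ)+2)) := by rw [Int.emod_def]
    rw [e1, e2, e3]; ring
  · simp only [List.map_cons, List.map_nil, List.sum_cons, List.sum_nil, add_zero]
    rw [hd2, hdodd, hdn, hcast]
    push_cast
    try ring
  · exact ⟨(a % (4*(h:ℤ) + 2), 4*h + 2), by simp, rfl, rfl⟩
end

section
/- For every integer s ≥ 2: (i) D₁ = (4s, 0; (1, 2), (−1, 4s), (2s+1, 4s)) is a cyclic data set of degree 4s and genus s, and D₂ = (4s−4, 0; (1, 2), (1, 4s−4), (2s−3, 4s−4)) is a cyclic data set of degree 4s−4 and genus s−1; (ii) (2s+1)² ≡ 1 (mod 4s) and (2s−3)² ≡ 1 (mod 4s−4), so 2s+1 and 2s−3 are their own inverses modulo 4s and 4s−4 respectively; (iii) with n = lcm(4s, 4s−4) = 4s(s−1), one has (s−1)·(−1) + s·1 = 1 and (s−1)(2s+1) + s(2s−3) = 4s(s−1) − 1 ≡ −1 (mod n); hence the fixed points (−1, 4s) of D₁ and (1, 4s−4) of D₂ are compatible with twist factor 1, and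 the fixed points (2s+1, 4s) of D₁ and (2s−3, 4s−4) of D₂ are compatible with twist factor −1. -/
theorem Int.isCoprime_of_mul_modEq_one {a b m : ℤ} (h : a * b ≡ 1 [ZMOD m]) : IsCoprime a m := by
  obtain ⟨k, hk⟩ := Int.modEq_iff_dvd.mp h
  exact ⟨b, k, by linear_combination -hk⟩

theorem Int.sq_two_mul_add_one_modEq_one (k : ℤ) : (2 * k + 1) ^ 2 ≡ 1 [ZMOD 4 * k] :=
  Int.modEq_iff_dvd.mpr ⟨-(k + 1), by ring⟩

theorem Int.sq_two_mul_sub_one_modEq_one (k : ℤ) : (2 * k - 1) ^ 2 ≡ 1 [ZMOD 4 * k] :=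
  Int.modEq_iff_dvd.mpr ⟨-(k - 1), by ring⟩

theorem Int.isCoprime_of_sq_modEq_one {a m : ℤ} (h : a ^ 2 ≡ 1 [ZMOD m]) : IsCoprime a m :=
  Int.isCoprime_of_mul_modEq_one (by rwa [← sq])

theorem isCyclicDataSet_four_mul {g : ℕ} (hg : 1 ≤ g) {a b : ℤ}
    (ha : IsCoprime a (4 * g)) (hb : IsCoprime b (4 * g)) (hsum : (4 * g : ℤ) ∣ 2 * g + a + b) :
    IsCyclicDataSet (4 * g) 0 g [(1, 2), (a, 4 * g), (b, 4 * g)] := by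
  have hlcm : Nat.lcm 2 (4 * g) = 4 * g := Nat.lcm_eq_right ⟨2 * g, by ring⟩
  have hhalf : (4 * (g : ℤ)) / 2 = 2 * g := by omega
  have hself : (4 * (g : ℤ)) / (4 * g) = 1 := Int.ediv_self (by positivity)
  refine ⟨by omega, List.cons_ne_nil _ _, ?_, ?_, ?_, ?_, ?_⟩
  · simp only [List.mem_cons, List.not_mem_nil, or_false]
    rintro p (rfl | rfl | rfl)
    · exact ⟨le_rfl, ⟨2 * g, by ring⟩, by simp⟩
    · exact ⟨by omega, dvd_rfl, Int.isCoprime_iff_gcd_eq_one.mp (by exact_mod_cast ha)⟩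
    · exact ⟨by omega, dvd_rfl, Int.isCoprime_iff_gcd_eq_one.mp (by exact_mod_cast hb)⟩
  · intro i hi
    simp only [List.length_cons, List.length_nil] at hi
    interval_cases i <;> simp [List.eraseIdx, hlcm]
  · intro _
    simp [hlcm]
  · simpa [hhalf, hself, add_assoc] using hsum
  · simp only [List.map_cons, List.map_nil, List.sum_cons, List.sum_nil]
    push_cast
    rw [hhalf, hself]
    ring

/-- For every integer `s ≥ 2`:
(i) `D₁ = (4s, 0; (1, 2), (−1, 4s), (2s+1, 4s))` is a cyclic data set of degree `4s` and
genus `s`, and `D₂ = (4s−4, 0; (1, 2), (1, 4s−4), (2s−3, 4s−4))` is a cyclic data set of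
degree `4s−4` and genus `s−1`;
(ii) `(2s+1)² ≡ 1 (mod 4s)` and `(2s−3)² ≡ 1 (mod 4s−4)`;
(iii) with `n = lcm(4s, 4s−4) = 4s(s−1)`, `(s−1)·(−1) + s·1 = 1` and
`(s−1)(2s+1) + s(2s−3) = 4s(s−1) − 1 ≡ −1 (mod n)`; hence the fixed points `(−1, 4s)`
and `(1, 4s−4)` are compatible with twist factor `1`, and the fixed points `(2s+1, 4s)`
and `(2s−3, 4s−4)` are compatible with twist factor `−1`. -/
theorem stmt_12 (s : ℕ) (hs : 2 ≤ s) :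
    IsCyclicDataSet (4*s) 0 s [(1, 2), (-1, 4*s), (2*(s:ℤ) + 1, 4*s)] ∧
    IsCyclicDataSet (4*s - 4) 0 (s - 1)
      [(1, 2), (1, 4*s - 4), (2*(s:ℤ) - 3, 4*s - 4)] ∧
    (2*(s:ℤ) + 1)^2 ≡ 1 [ZMOD 4*(s:ℤ)] ∧
    (2*(s:ℤ) - 3)^2 ≡ 1 [ZMOD 4*(s:ℤ) - 4] ∧
    Nat.lcm (4*s) (4*s - 4) = 4*s*(s - 1) ∧
    ((s:ℤ) - 1) * (-1) + (s:ℤ) * 1 = 1 ∧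
    ((s:ℤ) - 1) * (-1) + (s:ℤ) * 1 ≡ 1 [ZMOD 4*(s:ℤ)*((s:ℤ) - 1)] ∧
    ((s:ℤ) - 1) * (2*(s:ℤ) + 1) + (s:ℤ) * (2*(s:ℤ) - 3) = 4*(s:ℤ)*((s:ℤ) - 1) - 1 ∧
    ((s:ℤ) - 1) * (2*(s:ℤ) + 1) + (s:ℤ) * (2*(s:ℤ) - 3)
      ≡ -1 [ZMOD 4*(s:ℤ)*((s:ℤ) - 1)] := by
  obtain ⟨k, rfl⟩ : ∃ k, s = k + 1 := ⟨s - 1, by omega⟩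
  have hdeg : 4 * (k + 1) - 4 = 4 * k := by omega
  rw [hdeg, Nat.add_sub_cancel]
  push_cast
  have hinv₁ : (2 * ((k : ℤ) + 1) + 1) ^ 2 ≡ 1 [ZMOD 4 * ((k : ℤ) + 1)] :=
    Int.sq_two_mul_add_one_modEq_one _
  have hinv₂' : (2 * (k : ℤ) - 1) ^ 2 ≡ 1 [ZMOD 4 * k] := Int.sq_two_mul_sub_one_modEq_one _
  have hinv₂ : (2 * ((k : ℤ) + 1) - 3) ^ 2 ≡ 1 [ZMOD 4 * ((k : ℤ) + 1) - 4] := by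
    convert hinv₂' using 2 <;> ring
  have hsum : ((k : ℤ) + 1 - 1) * (2 * (k + 1) + 1) + (k + 1) * (2 * (k + 1) - 3)
      = 4 * (k + 1) * (k + 1 - 1) - 1 := by ring
  refine ⟨?_, ?_, hinv₁, hinv₂, ?_, by ring, by ring_nf; rfl, hsum, ?_⟩
  · exact isCyclicDataSet_four_mul (by omega) isCoprime_one_left.neg_left
      (by exact_mod_cast Int.isCoprime_of_sq_modEq_one hinv₁) ⟨1, by push_cast; ring⟩
  · exact isCyclicDataSet_four_mul (by omega) isCoprime_one_left
      (by convert Int.isCoprime_of_sq_modEq_one hinv₂' using 1; ring) ⟨1, by ring⟩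
  · rw [Nat.lcm_mul_left, (Nat.coprime_self_add_left.mpr (Nat.coprime_one_left k)).lcm_eq_mul]
    ring
  · rw [hsum]
    exact Int.modEq_iff_dvd.mpr ⟨-1, by ring⟩
end

section
/- For every integer g ≥ 3, the tuple (2g−1, 0; (−4, 2g−1), (2, 2g−1), (2, 2g−1)) — rotation constants reduced modulo 2g−1 — is a cyclic data set of degree 2g−1 and genus g−1, and its two cone points (2, 2g−1) are compatible with twist factor 1: indeed 2^{−1} ≡ g (mod 2g−1) and g + g ≡ 1 (mod 2g−1). -/
/-
The cone points all have order `n = 2g - 1`, so the lcm conditions are automatic, each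
`n/nᵢ` is `1`, and the remaining conditions are congruences for the odd number `2g - 1`:
`2` is invertible modulo it with inverse `g`, the rotation constants `-4, 2, 2` sum to `0`,
and Riemann–Hurwitz reads `2(g-1) - 2 = -2(2g-1) + 3(2g-2)`.
-/

theorem List.foldr_lcm_replicate_succ (k n : ℕ) :
    (List.replicate (k + 1) n).foldr Nat.lcm 1 = n := by
  induction k with
  | zero => simp
  | succ k ih => rw [List.replicate_succ, List.foldr_cons, ih, Nat.lcm_self]

theorem isCyclicDataSet_of_forall_snd_eq {n g₀ g : ℕ} {C : List (ℤ × ℕ)} (hn : 2 ≤ n)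
    (hC : 2 ≤ C.length) (hsnd : ∀ p ∈ C, p.2 = n) (hcop : ∀ p ∈ C, IsCoprime p.1 n)
    (hsum : (n : ℤ) ∣ (C.map Prod.fst).sum)
    (hRH : 2 * (g : ℤ) - 2 = n * (2 * g₀ - 2) + C.length * (n - 1)) :
    IsCyclicDataSet n g₀ g C := by
  obtain ⟨k, hk⟩ : ∃ k, C.length = k + 2 := ⟨C.length - 2, by omega⟩
  have hmap : C.map Prod.snd = List.replicate (k + 2) n :=
    List.eq_replicate_iff.2 ⟨by simp [hk], List.forall_mem_map.2 hsnd⟩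
  have hlcm : (C.map Prod.snd).foldr Nat.lcm 1 = n := by
    rw [hmap, List.foldr_lcm_replicate_succ]
  have hself : (n : ℤ) / n = 1 := Int.ediv_self (by omega)
  refine ⟨hn, List.ne_nil_of_length_pos (by omega), fun p hp => ?_, fun i hi => ?_,
    fun _ => hlcm, ?_, ?_⟩
  · rw [hsnd p hp]
    exact ⟨hn, dvd_rfl, Int.isCoprime_iff_gcd_eq_one.1 (hcop p hp)⟩
  · rw [hlcm, hmap, List.eraseIdx_replicate, if_pos (by omega)]
    exact List.foldr_lcm_replicate_succ k n
  · rwa [List.map_congr_left fun p hp => by rw [hsnd p hp, hself, one_mul]]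
  · rw [hRH, List.map_congr_left fun p hp => by rw [hsnd p hp, hself], List.map_const',
      List.sum_replicate, nsmul_eq_mul]

theorem Int.isCoprime_two_two_mul_sub_one (m : ℤ) : IsCoprime 2 (2 * m - 1) :=
  ⟨m, -1, by ring⟩

theorem Int.two_mul_modEq_one (m : ℤ) : 2 * m ≡ 1 [ZMOD 2 * m - 1] :=
  Int.modEq_iff_dvd.2 ⟨-1, by ring⟩

/-- For every integer `g ≥ 3`, the tuple
`(2g−1, 0; (−4, 2g−1), (2, 2g−1), (2, 2g−1))` — rotation constants reduced modulo
`2g−1` — is a cyclic data set of degree `2g−1` and genus `g−1`, and its two cone points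
`(2, 2g−1)` are compatible with twist factor `1`: indeed `2⁻¹ ≡ g (mod 2g−1)` and
`g + g ≡ 1 (mod 2g−1)`. -/
theorem stmt_13 (g : ℕ) (hg : 3 ≤ g) :
    IsCyclicDataSet (2*g - 1) 0 (g - 1)
      [((-4 : ℤ) % (2*(g:ℤ) - 1), 2*g - 1), (2, 2*g - 1), (2, 2*g - 1)] ∧
    2 * (g:ℤ) ≡ 1 [ZMOD 2*(g:ℤ) - 1] ∧
    (g:ℤ) + (g:ℤ) ≡ 1 [ZMOD 2*(g:ℤ) - 1] := by
  have hN : ((2 * g - 1 : ℕ) : ℤ) = 2 * (g : ℤ) - 1 := by omega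
  have hcop2 := Int.isCoprime_two_two_mul_sub_one g
  have hcop4 : IsCoprime ((-4 : ℤ) % (2 * (g : ℤ) - 1)) (2 * (g : ℤ) - 1) := by
    rw [Int.isCoprime_iff_gcd_eq_one, Int.gcd_emod, ← Int.isCoprime_iff_gcd_eq_one]
    simpa using (hcop2.mul_left hcop2).neg_left
  have hsum : (-4 : ℤ) % (2 * g - 1) + (2 + 2) ≡ 0 [ZMOD 2 * g - 1] :=
    (Int.mod_modEq _ _).add_right _
  refine ⟨isCyclicDataSet_of_forall_snd_eq (by omega) (by simp) (by simp) ?_ ?_ ?_,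
    Int.two_mul_modEq_one g, two_mul (g : ℤ) ▸ Int.two_mul_modEq_one g⟩
  · simp [hN, hcop2, hcop4]
  · simpa [hN, add_assoc] using Int.modEq_zero_iff_dvd.1 hsum
  · push_cast [hN, Nat.cast_sub (by omega : 1 ≤ g), List.length_cons, List.length_nil]
    ring
end
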